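/- arXiv:1102.0490 — 2 statements merged into one kernel-verified Lean document; each statement's English description precedes it below -/
import Mathlib

section
/- Let n ≥ 3, let s_i, s_j be reflections and x^m a rotation in D_n. Then for every ℓ ∈ ℤ, the triple (s_i, s_j, x^m) is Hurwitz equivalent to (s_{i+2ℓm}, s_{j+2ℓm}, x^m); more precisely, (s_i, s_j, x^m)·(σ_2 σ_1 σ_1 σ_2)^ℓ = (s_{i+2ℓm}, s_{j+2ℓm}, x^m). -/
/-- One elementary braid (Hurwitz) move on a tuple of elements of a group `G`,
encoded as a list: `σᵢ` replaces the adjacent pair `(a, b)` occurring at some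
position by `(a * b * a⁻¹, a)`. -/
inductive BraidStep {G : Type*} [Group G] : List G → List G → Prop
  | head (a b : G) (t : List G) : BraidStep (a :: b :: t) (a * b * a⁻¹ :: a :: t)
  | tail (a : G) {l₁ l₂ : List G} : BraidStep l₁ l₂ → BraidStep (a :: l₁) (a :: l₂)

/-- Hurwitz (braid) equivalence: the equivalence relation generated by
elementary braid moves (so finitely many moves and their inverses). -/
def HurwitzEquiv {G : Type*} [Group G] : List G → List G → Prop :=
  Relation.EqvGen BraidStep

/-- Braid-automorphism equivalence: `v` and `w` differ by a braid move sequence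
together with the diagonal action of a group automorphism. -/
def BAEquiv {G : Type*} [Group G] (v w : List G) : Prop :=
  ∃ φ : G ≃* G, HurwitzEquiv (v.map ⇑φ) w

/-- A `G`-Hurwitz vector (genus 0): all entries nontrivial, the entries
generate `G`, and the product of the entries is `1`. -/
def IsHurwitzVector {G : Type*} [Group G] (v : List G) : Prop :=
  (∀ c ∈ v, c ≠ 1) ∧ Subgroup.closure {g | g ∈ v} = ⊤ ∧ v.prod = 1

/-- The reflection `s i = x^i * y` of the dihedral group `D_n`,
where `x = DihedralGroup.r 1` and `y = DihedralGroup.sr 0`. -/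
def sD {n : ℕ} (i : ZMod n) : DihedralGroup n :=
  DihedralGroup.r i * DihedralGroup.sr 0

/-- Being a reflection in the dihedral group. -/
def IsReflection {n : ℕ} (g : DihedralGroup n) : Prop :=
  ∃ i : ZMod n, g = DihedralGroup.sr i

/-- The elementary braid `σ₁` acting on triples. -/
def sigma1 {G : Type*} [Group G] : Equiv.Perm (G × G × G) where
  toFun p := (p.1 * p.2.1 * p.1⁻¹, p.1, p.2.2)
  invFun p := (p.2.1, p.2.1⁻¹ * p.1 * p.2.1, p.2.2)
  left_inv := by rintro ⟨a, b, c⟩; simp [mul_assoc]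
  right_inv := by rintro ⟨a, b, c⟩; simp [mul_assoc]

/-- The elementary braid `σ₂` acting on triples. -/
def sigma2 {G : Type*} [Group G] : Equiv.Perm (G × G × G) where
  toFun p := (p.1, p.2.1 * p.2.2 * p.2.1⁻¹, p.2.1)
  invFun p := (p.1, p.2.2, p.2.2⁻¹ * p.2.1 * p.2.2)
  left_inv := by rintro ⟨a, b, c⟩; simp [mul_assoc]
  right_inv := by rintro ⟨a, b, c⟩; simp [mul_assoc]

/-! On a triple `(a, b, c)` the braid `σ₂σ₁σ₁σ₂` acts as `(a, b, c) ↦ (X a X⁻¹, X b X⁻¹, X)` with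
`X = (a b) c (a b)⁻¹`. For two reflections `a, b` of `D_n` the product `a b` is a rotation, so it
commutes with the rotation `c = x^m`: the braid conjugates both reflections by `x^m`, which shifts
their indices by `2m`, and fixes `x^m`. Iterating `ℓ` times shifts by `2ℓm`, and every power of the
braid moves a triple within its Hurwitz class. -/

open DihedralGroup

section Hurwitz

variable {G : Type*} [Group G]

def tripleList (p : G × G × G) : List G := [p.1, p.2.1, p.2.2]

variable (G) in
def hurwitzMoves : Subgroup (Equiv.Perm (G × G × G)) where
  carrier := {f | ∀ p, HurwitzEquiv (tripleList p) (tripleList (f p))}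
  one_mem' _ := Relation.EqvGen.refl _
  mul_mem' hf hg p := (hg p).trans _ _ _ (hf _)
  inv_mem' {f} hf p := by
    have h := (hf (f⁻¹ p)).symm
    rwa [← Equiv.Perm.mul_apply, mul_inv_cancel, Equiv.Perm.one_apply] at h

lemma sigma1_mem_hurwitzMoves : sigma1 ∈ hurwitzMoves G := fun ⟨a, b, c⟩ =>
  Relation.EqvGen.rel _ _ (BraidStep.head a b [c])

lemma sigma2_mem_hurwitzMoves : sigma2 ∈ hurwitzMoves G := fun ⟨a, b, c⟩ =>
  Relation.EqvGen.rel _ _ (BraidStep.tail a (BraidStep.head b c []))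

lemma hurwitzEquiv_zpow_apply (ℓ : ℤ) (p : G × G × G) :
    HurwitzEquiv (tripleList p)
      (tripleList (((sigma2 * sigma1 * sigma1 * sigma2 : Equiv.Perm (G × G × G)) ^ ℓ) p)) := by
  have h1 := sigma1_mem_hurwitzMoves (G := G)
  have h2 := sigma2_mem_hurwitzMoves (G := G)
  exact zpow_mem (mul_mem (mul_mem (mul_mem h2 h1) h1) h2) ℓ p

lemma braidWord_apply_of_commute {a b c : G} (h : Commute (a * b) c) :
    (sigma2 * sigma1 * sigma1 * sigma2 : Equiv.Perm (G × G × G)) (a, b, c) =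
      (c * a * c⁻¹, c * b * c⁻¹, c) := by
  have hX : a * (b * c * b⁻¹) * a⁻¹ = c := by
    calc a * (b * c * b⁻¹) * a⁻¹ = a * b * c * (a * b)⁻¹ := by group
      _ = c := by rw [h.eq, mul_inv_cancel_right]
  simp only [Equiv.Perm.mul_apply, sigma1, sigma2, Equiv.coe_fn_mk, hX]

end Hurwitz

lemma Equiv.Perm.zpow_apply_of_apply_eq_add {α β : Type*} [AddGroup β] (f : Equiv.Perm α)
    (e : β → α) (c : β) (h : ∀ b, f (e b) = e (b + c)) (ℓ : ℤ) (b : β) :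
    (f ^ ℓ) (e b) = e (b + ℓ • c) := by
  have h_inv : ∀ b, f⁻¹ (e b) = e (b - c) := fun b => by
    rw [Equiv.Perm.inv_eq_iff_eq, h, sub_add_cancel]
  induction ℓ using Int.induction_on generalizing b with
  | zero => simp
  | succ k ih =>
    rw [zpow_add_one, Equiv.Perm.mul_apply, h, ih, add_assoc, add_comm (k : ℤ) 1, one_add_zsmul]
  | pred k ih =>
    rw [zpow_sub_one, Equiv.Perm.mul_apply, h_inv, ih, sub_eq_add_neg (-(k : ℤ)) 1,
      add_comm (-(k : ℤ)), add_zsmul, neg_one_zsmul, ← add_assoc, ← sub_eq_add_neg]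

section Dihedral

variable {n : ℕ}

lemma sD_eq_sr (i : ZMod n) : sD i = sr (-i) := by
  rw [sD, r_mul_sr, zero_sub]

lemma sD_mul_sD (i j : ZMod n) : sD i * sD j = r (i - j) := by
  rw [sD_eq_sr, sD_eq_sr, sr_mul_sr, neg_sub_neg]

lemma r_mul_sD_mul_inv (m i : ZMod n) : r m * sD i * (r m)⁻¹ = sD (i + 2 * m) := by
  rw [sD_eq_sr, sD_eq_sr, inv_r, r_mul_sr, sr_mul_r]
  ring_nf

lemma commute_r (a b : ZMod n) : Commute (r a) (r b) := by
  rw [commute_iff_eq, r_mul_r, r_mul_r, add_comm]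

lemma braidWord_apply_sD (i j m : ZMod n) :
    (sigma2 * sigma1 * sigma1 * sigma2 :
        Equiv.Perm (DihedralGroup n × DihedralGroup n × DihedralGroup n)) (sD i, sD j, r m) =
      (sD (i + 2 * m), sD (j + 2 * m), r m) := by
  rw [braidWord_apply_of_commute (sD_mul_sD i j ▸ commute_r _ m), r_mul_sD_mul_inv,
    r_mul_sD_mul_inv]

end Dihedral

theorem conjugate_pair_by_rotation_general (n : ℕ) (i j m : ZMod n) (ℓ : ℤ) :
    HurwitzEquiv [sD i, sD j, DihedralGroup.r m]
      [sD (i + 2 * (ℓ : ZMod n) * m), sD (j + 2 * (ℓ : ZMod n) * m), DihedralGroup.r m] ∧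
    ((sigma2 * sigma1 * sigma1 * sigma2 :
        Equiv.Perm (DihedralGroup n × DihedralGroup n × DihedralGroup n)) ^ ℓ)
        (sD i, sD j, DihedralGroup.r m) =
      (sD (i + 2 * (ℓ : ZMod n) * m), sD (j + 2 * (ℓ : ZMod n) * m), DihedralGroup.r m) := by
  have hpow : ((sigma2 * sigma1 * sigma1 * sigma2 :
        Equiv.Perm (DihedralGroup n × DihedralGroup n × DihedralGroup n)) ^ ℓ)
        (sD i, sD j, r m) =
      (sD (i + 2 * (ℓ : ZMod n) * m), sD (j + 2 * (ℓ : ZMod n) * m), r m) := by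
    have h := Equiv.Perm.zpow_apply_of_apply_eq_add _
      (fun p : ZMod n × ZMod n => (sD p.1, sD p.2, r m)) (2 * m, 2 * m)
      (fun p => braidWord_apply_sD p.1 p.2 m) ℓ (i, j)
    simpa [zsmul_eq_mul, mul_assoc, mul_left_comm] using h
  refine ⟨?_, hpow⟩
  simpa [tripleList, hpow] using hurwitzEquiv_zpow_apply ℓ (sD i, sD j, r m)

/-- for all `ℓ ∈ ℤ`, `(s_i, s_j, x^m)` is Hurwitz equivalent to
`(s_{i+2ℓm}, s_{j+2ℓm}, x^m)`; more precisely
`(s_i, s_j, x^m)·(σ₂σ₁σ₁σ₂)^ℓ = (s_{i+2ℓm}, s_{j+2ℓm}, x^m)` (the braid word acts on the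
right, i.e. `σ₂` is applied first). -/
theorem conjugate_pair_by_rotation (n : ℕ) (hn : 3 ≤ n) (i j m : ZMod n) (ℓ : ℤ) :
    HurwitzEquiv [sD i, sD j, DihedralGroup.r m]
      [sD (i + 2 * (ℓ : ZMod n) * m), sD (j + 2 * (ℓ : ZMod n) * m), DihedralGroup.r m] ∧
    ((sigma2 * sigma1 * sigma1 * sigma2 :
        Equiv.Perm (DihedralGroup n × DihedralGroup n × DihedralGroup n)) ^ ℓ)
        (sD i, sD j, DihedralGroup.r m) =
      (sD (i + 2 * (ℓ : ZMod n) * m), sD (j + 2 * (ℓ : ZMod n) * m), DihedralGroup.r m) :=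
  conjugate_pair_by_rotation_general n i j m ℓ
end

section
/- Let n ≥ 3 be odd and j ∈ ℤ/nℤ. Then the 6-tuple of reflections (s_0, s_0, s_j, s_j, s_j, s_j) in D_n is Hurwitz equivalent to (s_0, s_0, s_0, s_0, s_j, s_j). -/
open DihedralGroup in
lemma sD_eq {n : ℕ} (i : ZMod n) : sD i = DihedralGroup.sr (-i) := by
  simp [sD, r_mul_sr, zero_sub]

lemma sD_inv {n : ℕ} (i : ZMod n) : (sD i)⁻¹ = sD i := by
  rw [inv_eq_iff_mul_eq_one, sD_eq, DihedralGroup.sr_mul_self]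

lemma sD_conj {n : ℕ} (a b : ZMod n) : sD a * sD b * (sD a)⁻¹ = sD (2*a - b) := by
  rw [sD_inv, sD_eq, sD_eq, sD_eq, DihedralGroup.sr_mul_sr, DihedralGroup.r_mul_sr]
  ring_nf

namespace HurwitzAux

variable {G : Type*} [Group G]

lemma hrefl (l : List G) : HurwitzEquiv l l := Relation.EqvGen.refl l
lemma hsymm {l₁ l₂ : List G} (h : HurwitzEquiv l₁ l₂) : HurwitzEquiv l₂ l₁ :=
  Relation.EqvGen.symm _ _ h
lemma htrans {l₁ l₂ l₃ : List G} (h : HurwitzEquiv l₁ l₂) (h' : HurwitzEquiv l₂ l₃) :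
    HurwitzEquiv l₁ l₃ := Relation.EqvGen.trans _ _ _ h h'

lemma hcons (a : G) {l₁ l₂ : List G} (h : HurwitzEquiv l₁ l₂) :
    HurwitzEquiv (a :: l₁) (a :: l₂) := by
  induction h with
  | rel x y hxy => exact Relation.EqvGen.rel _ _ (BraidStep.tail a hxy)
  | refl x => exact Relation.EqvGen.refl _
  | symm x y _ ih => exact Relation.EqvGen.symm _ _ ih
  | trans x y z _ _ ih₁ ih₂ => exact Relation.EqvGen.trans _ _ _ ih₁ ih₂

variable {n : ℕ}

lemma hstep (a b c : ZMod n) (h : c = 2*a - b) (t : List (DihedralGroup n)) :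
    HurwitzEquiv (sD a :: sD b :: t) (sD c :: sD a :: t) := by
  subst h
  have := BraidStep.head (sD a) (sD b) t
  rw [sD_conj] at this
  exact Relation.EqvGen.rel _ _ this

/-- `[a,a,b] ~ [b,a,a]` -/
lemma jump3 (a b : ZMod n) (t : List (DihedralGroup n)) :
    HurwitzEquiv (sD a :: sD a :: sD b :: t) (sD b :: sD a :: sD a :: t) := by
  refine htrans (hcons _ (hstep a b (2*a-b) rfl t)) ?_
  exact hstep a (2*a-b) b (by ring) (sD a :: t)

/-- R4: `[a,a,b,b] ~ [c,c,a,a]`, `c = 2a-b` -/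
lemma R4 (a b c : ZMod n) (h : c = 2*a - b) (t : List (DihedralGroup n)) :
    HurwitzEquiv (sD a :: sD a :: sD b :: sD b :: t) (sD c :: sD c :: sD a :: sD a :: t) := by
  subst h
  refine htrans (hcons _ (hstep a b (2*a-b) rfl (sD b :: t))) ?_
  refine htrans (hcons _ (hcons _ (hstep a b (2*a-b) rfl t))) ?_
  exact hsymm (jump3 (2*a-b) a (sD a :: t))

/-- S4: `[a,a,b,b] ~ [b,b,a,a]` -/
lemma S4 (a b : ZMod n) (t : List (DihedralGroup n)) :
    HurwitzEquiv (sD a :: sD a :: sD b :: sD b :: t) (sD b :: sD b :: sD a :: sD a :: t) :=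
  htrans (jump3 a b (sD b :: t)) (hcons _ (jump3 a b t))

/-- T4: `[a,a,b,b] ~ [a,a,2a-b,2a-b]` -/
lemma T4 (a b c : ZMod n) (h : c = 2*a - b) (t : List (DihedralGroup n)) :
    HurwitzEquiv (sD a :: sD a :: sD b :: sD b :: t) (sD a :: sD a :: sD c :: sD c :: t) :=
  htrans (R4 a b c h t) (S4 c a t)

/-- U4: `[a,a,b,b] ~ [2b-a,2b-a,b,b]` -/
lemma U4 (a b c : ZMod n) (h : c = 2*b - a) (t : List (DihedralGroup n)) :
    HurwitzEquiv (sD a :: sD a :: sD b :: sD b :: t) (sD c :: sD c :: sD b :: sD b :: t) :=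
  htrans (S4 a b t) (R4 b a c h t)

/-- one round: `[0,0,m,m,j,j] ~ [0,0,m-2j,m-2j,j,j]` -/
lemma round (m j m' : ZMod n) (h : m' = m - 2*j) :
    HurwitzEquiv [sD (0:ZMod n), sD 0, sD m, sD m, sD j, sD j]
      [sD (0:ZMod n), sD 0, sD m', sD m', sD j, sD j] := by
  refine htrans (hcons _ (hcons _ (U4 m j (2*j-m) rfl []))) ?_
  exact T4 0 (2*j-m) m' (by rw [h]; ring) [sD j, sD j]

lemma rounds (j : ZMod n) (k : ℕ) :
    HurwitzEquiv [sD (0:ZMod n), sD 0, sD j, sD j, sD j, sD j]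
      [sD (0:ZMod n), sD 0, sD (j - 2*k*j), sD (j - 2*k*j), sD j, sD j] := by
  induction k with
  | zero => simpa using hrefl _
  | succ k ih =>
      refine htrans ih (round _ j _ ?_)
      push_cast
      ring

end HurwitzAux

/-- for `n` odd, `(s_0, s_0, s_j, s_j, s_j, s_j)` is Hurwitz equivalent to
`(s_0, s_0, s_0, s_0, s_j, s_j)`. -/
theorem six_tuple_odd (n : ℕ) (hn : 3 ≤ n) (hodd : Odd n) (j : ZMod n) :
    HurwitzEquiv
      [sD (0 : ZMod n), sD (0 : ZMod n), sD j, sD j, sD j, sD j]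
      [sD (0 : ZMod n), sD (0 : ZMod n), sD (0 : ZMod n), sD (0 : ZMod n), sD j, sD j] := by
  have h := HurwitzAux.rounds j ((n+1)/2)
  have h2 : (2 * ((n+1)/2) : ℕ) = n + 1 := by
    obtain ⟨m, hm⟩ := hodd
    omega
  have h3 : (j : ZMod n) - 2*((((n+1)/2 : ℕ)) : ZMod n)*j = 0 := by
    have : ((2 * ((n+1)/2) : ℕ) : ZMod n) = ((n+1 : ℕ) : ZMod n) := by rw [h2]
    push_cast at this
    rw [ZMod.natCast_self] at this
    rw [this]
    ring
  rwa [h3] at h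
end
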